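/- arXiv:2202.05326 — 2 statements merged into one kernel-verified Lean document; each statement's English description precedes it below -/
import Mathlib

section
/- Let β ∈ (0,1), r, λ, Λ ∈ ℝ with r ≠ λ(1−β), set θ := (r − λ(1−β))/β, let T > 0 and k₀ > 0, and suppose that (k₀ − Λ/θ)·exp(−θ(T−t)) + Λ/θ > 0 for all t in an open interval I ⊆ ℝ containing [0,T]. Define ψ₀(t) := exp(−rt/(1−β))·[(k₀ − Λ/θ)·exp(−θ(T−t)) + Λ/θ]^{β/(1−β)}. Then: (i) for every t ∈ I, −ψ₀′(t) = λ·ψ₀(t) + (β/(1−β))·Λ·exp(−rt/β)·ψ₀(t)^{(2β−1)/β}; and (ii) ψ₀(T)^{1−β} = exp(−rT)·k₀^{β}. -/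
/-!
Write `θ = (r − λ(1−β))/β` and `G(t) = (k₀ − Λ/θ)·e^{−θ(T−t)} + Λ/θ`, so that `G' = θG − Λ`,
`G(T) = k₀` and `ψ₀ = e^{−rt/(1−β)} G^{β/(1−β)}`. Logarithmic differentiation gives
`ψ₀'/ψ₀ = −r/(1−β) + β/(1−β)·(θ − Λ/G) = −λ − β/(1−β)·Λ/G`, and the nonlinear term of the ODE
is the same expression in disguise: `e^{−rt/β} ψ₀^{(2β−1)/β} = ψ₀/G`.
-/

open Real

theorem hasDerivAt_mul_exp_add_div {θ : ℝ} (hθ : θ ≠ 0) (c T Λ t : ℝ) :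
    HasDerivAt (fun s => c * exp (-θ * (T - s)) + Λ / θ)
      (θ * (c * exp (-θ * (T - t)) + Λ / θ) - Λ) t := by
  have hlin : HasDerivAt (fun s : ℝ => -θ * (T - s)) θ t := by
    simpa using ((hasDerivAt_id t).const_sub T).const_mul (-θ)
  refine ((hlin.exp.const_mul c).add_const (Λ / θ)).congr_deriv ?_
  field_simp
  ring

theorem hasDerivAt_exp_mul_rpow {g : ℝ → ℝ} {g' t : ℝ} (hg : HasDerivAt g g' t)
    (hpos : 0 < g t) (c p : ℝ) :
    HasDerivAt (fun s => exp (c * s) * g s ^ p)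
      (exp (c * t) * g t ^ p * (c + p * g' / g t)) t := by
  have hexp : HasDerivAt (fun s => exp (c * s)) (exp (c * t) * c) t := by
    simpa using ((hasDerivAt_id t).const_mul c).exp
  refine (hexp.mul (hg.rpow_const (p := p) (Or.inl hpos.ne'))).congr_deriv ?_
  rw [rpow_sub_one hpos.ne']
  field_simp

theorem exp_mul_rpow_rpow {G : ℝ} (hG : 0 ≤ G) (a p q : ℝ) :
    (exp a * G ^ p) ^ q = exp (a * q) * G ^ (p * q) := by
  rw [mul_rpow (exp_pos a).le (rpow_nonneg hG p), ← exp_mul, ← rpow_mul hG]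

theorem exp_div_mul_rpow_two_mul_sub_one_div {β G : ℝ} (hβ0 : β ≠ 0) (hβ1 : 1 - β ≠ 0)
    (hG : 0 < G) (u : ℝ) :
    exp (u / β) * (exp (u / (1 - β)) * G ^ (β / (1 - β))) ^ ((2 * β - 1) / β)
      = exp (u / (1 - β)) * G ^ (β / (1 - β)) / G := by
  rw [exp_mul_rpow_rpow hG.le, ← mul_assoc, ← exp_add, mul_div_assoc,
    ← rpow_sub_one hG.ne']
  congr 2 <;> field_simp <;> ring

theorem exp_div_mul_rpow_rpow_one_sub {β k : ℝ} (hβ1 : 1 - β ≠ 0) (hk : 0 ≤ k) (u : ℝ) :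
    (exp (u / (1 - β)) * k ^ (β / (1 - β))) ^ (1 - β) = exp u * k ^ β := by
  rw [exp_mul_rpow_rpow hk, div_mul_cancel₀ u hβ1, div_mul_cancel₀ β hβ1]

theorem stmt_2_general (β r lam Λ T k₀ a b : ℝ) (hβ : β ∈ Set.Ioo (0 : ℝ) 1)
    (hrl : r ≠ lam * (1 - β)) (hk₀ : 0 < k₀)
    (hpos : ∀ t ∈ Set.Ioo a b,
      (k₀ - Λ / ((r - lam * (1 - β)) / β)) *
          Real.exp (-((r - lam * (1 - β)) / β) * (T - t))
        + Λ / ((r - lam * (1 - β)) / β) > 0) :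
    (∀ t ∈ Set.Ioo a b,
      HasDerivAt
        (fun s : ℝ => Real.exp (-r * s / (1 - β)) *
          ((k₀ - Λ / ((r - lam * (1 - β)) / β)) *
              Real.exp (-((r - lam * (1 - β)) / β) * (T - s))
            + Λ / ((r - lam * (1 - β)) / β)) ^ (β / (1 - β)))
        (-(lam * (Real.exp (-r * t / (1 - β)) *
            ((k₀ - Λ / ((r - lam * (1 - β)) / β)) *
                Real.exp (-((r - lam * (1 - β)) / β) * (T - t))
              + Λ / ((r - lam * (1 - β)) / β)) ^ (β / (1 - β)))
          + β / (1 - β) * Λ * Real.exp (-r * t / β) *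
            (Real.exp (-r * t / (1 - β)) *
              ((k₀ - Λ / ((r - lam * (1 - β)) / β)) *
                  Real.exp (-((r - lam * (1 - β)) / β) * (T - t))
                + Λ / ((r - lam * (1 - β)) / β)) ^ (β / (1 - β)))
              ^ ((2 * β - 1) / β))) t) ∧
    (Real.exp (-r * T / (1 - β)) *
        ((k₀ - Λ / ((r - lam * (1 - β)) / β)) *
            Real.exp (-((r - lam * (1 - β)) / β) * (T - T))
          + Λ / ((r - lam * (1 - β)) / β)) ^ (β / (1 - β))) ^ (1 - β)
      = Real.exp (-r * T) * k₀ ^ β := by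
  obtain ⟨hβ0, hβ1⟩ := hβ
  have hβ1' : 1 - β ≠ 0 := by linarith
  set θ := (r - lam * (1 - β)) / β
  have hθ : θ ≠ 0 := div_ne_zero (sub_ne_zero.mpr hrl) hβ0.ne'
  have hθβ : θ * β = r - lam * (1 - β) := div_mul_cancel₀ _ hβ0.ne'
  refine ⟨fun t ht => ?_, ?_⟩
  · have hG := hpos t ht
    have hψ := hasDerivAt_exp_mul_rpow (hasDerivAt_mul_exp_add_div hθ (k₀ - Λ / θ) T Λ t) hG
      (-r / (1 - β)) (β / (1 - β))
    have hexp_arg : ∀ s, exp (-r * s / (1 - β)) = exp (-r / (1 - β) * s) := fun s => by rw [mul_div_right_comm]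
    rw [mul_assoc (β / (1 - β) * Λ), exp_div_mul_rpow_two_mul_sub_one_div hβ0.ne' hβ1' hG]
    simp only [hexp_arg]
    refine hψ.congr_deriv ?_
    generalize (k₀ - Λ / θ) * exp (-θ * (T - t)) + Λ / θ = G at hG ⊢
    generalize exp (-r / (1 - β) * t) * G ^ (β / (1 - β)) = ψ
    field_simp
    linear_combination ψ * G * hθβ
  · rw [sub_self, mul_zero, exp_zero, mul_one, sub_add_cancel]
    exact exp_div_mul_rpow_rpow_one_sub hβ1' hk₀.le _

/-- **The function ψ₀ solves the reduced HJB ODE with the terminal condition.**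
Let `β ∈ (0,1)`, `r, λ, Λ ∈ ℝ` with `r ≠ λ(1−β)`, set `θ := (r − λ(1−β))/β`, let `T > 0`,
`k₀ > 0`, and suppose `(k₀ − Λ/θ)·exp(−θ(T−t)) + Λ/θ > 0` on an open interval `I = Ioo a b`
containing `[0,T]`.  Define
`ψ₀(t) := exp(−rt/(1−β))·[(k₀ − Λ/θ)·exp(−θ(T−t)) + Λ/θ]^{β/(1−β)}`.  Then
(i) for every `t ∈ I`,
`−ψ₀′(t) = λ·ψ₀(t) + (β/(1−β))·Λ·exp(−rt/β)·ψ₀(t)^{(2β−1)/β}`; and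
(ii) `ψ₀(T)^{1−β} = exp(−rT)·k₀^β`. -/
theorem stmt_2 (β r lam Λ T k₀ a b : ℝ) (hβ : β ∈ Set.Ioo (0 : ℝ) 1)
    (hrl : r ≠ lam * (1 - β)) (hT : 0 < T) (hk₀ : 0 < k₀)
    (hI : Set.Icc (0 : ℝ) T ⊆ Set.Ioo a b)
    (hpos : ∀ t ∈ Set.Ioo a b,
      (k₀ - Λ / ((r - lam * (1 - β)) / β)) *
          Real.exp (-((r - lam * (1 - β)) / β) * (T - t))
        + Λ / ((r - lam * (1 - β)) / β) > 0) :
    (∀ t ∈ Set.Ioo a b,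
      HasDerivAt
        (fun s : ℝ => Real.exp (-r * s / (1 - β)) *
          ((k₀ - Λ / ((r - lam * (1 - β)) / β)) *
              Real.exp (-((r - lam * (1 - β)) / β) * (T - s))
            + Λ / ((r - lam * (1 - β)) / β)) ^ (β / (1 - β)))
        (-(lam * (Real.exp (-r * t / (1 - β)) *
            ((k₀ - Λ / ((r - lam * (1 - β)) / β)) *
                Real.exp (-((r - lam * (1 - β)) / β) * (T - t))
              + Λ / ((r - lam * (1 - β)) / β)) ^ (β / (1 - β)))
          + β / (1 - β) * Λ * Real.exp (-r * t / β) *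
            (Real.exp (-r * t / (1 - β)) *
              ((k₀ - Λ / ((r - lam * (1 - β)) / β)) *
                  Real.exp (-((r - lam * (1 - β)) / β) * (T - t))
                + Λ / ((r - lam * (1 - β)) / β)) ^ (β / (1 - β)))
              ^ ((2 * β - 1) / β))) t) ∧
    (Real.exp (-r * T / (1 - β)) *
        ((k₀ - Λ / ((r - lam * (1 - β)) / β)) *
            Real.exp (-((r - lam * (1 - β)) / β) * (T - T))
          + Λ / ((r - lam * (1 - β)) / β)) ^ (β / (1 - β))) ^ (1 - β)
      = Real.exp (-r * T) * k₀ ^ β :=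
  stmt_2_general β r lam Λ T k₀ a b hβ hrl hk₀ hpos
end

section
/- Let N ≥ 1, γ > 0, b ∈ ℝᴺ, and let ν be a probability measure on ℝᴺ whose identity map is Bochner integrable with mean m₀ := ∫ x dν. Consider the set S of real numbers of the form ∫ (⟨b, y⟩ − ‖x − y‖²/(2γ)) dπ(x,y), where π ranges over all probability measures on ℝᴺ × ℝᴺ whose first marginal is ν and for which the maps (x,y) ↦ x, (x,y) ↦ y, and (x,y) ↦ ‖x−y‖² are integrable. Then ⟨b, m₀⟩ + (γ/2)·‖b‖² is the greatest element of S, and it is attained by the pushforward π* of ν under the map x ↦ (x, x + γ·b). -/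
/-!
Completing the square, `‖y - x‖² / (2γ) - ⟪b, y - x⟫ + γ/2 ‖b‖² = ‖(y - x) - γ • b‖² / (2γ) ≥ 0`,
bounds the integrand pointwise by `⟪b, x⟫ + γ/2 ‖b‖²`, with equality exactly when `y = x + γ • b`.
Integrating against any coupling with first marginal `ν` gives the upper bound `⟪b, m₀⟫ + γ/2 ‖b‖²`,
and the coupling supported on the graph of `x ↦ x + γ • b` attains it.
-/

open MeasureTheory
open scoped RealInnerProductSpace

section Pointwise

variable {E : Type*} [NormedAddCommGroup E] [InnerProductSpace ℝ E] {γ : ℝ}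

theorem inner_sub_norm_sub_sq_div_le (hγ : 0 < γ) (b x y : E) :
    ⟪b, y⟫ - ‖x - y‖ ^ 2 / (2 * γ) ≤ ⟪b, x⟫ + γ / 2 * ‖b‖ ^ 2 := by
  have hsquare : ‖(y - x) - γ • b‖ ^ 2 =
      ‖y - x‖ ^ 2 - 2 * γ * (⟪b, y⟫ - ⟪b, x⟫) + γ ^ 2 * ‖b‖ ^ 2 := by
    rw [norm_sub_sq_real, norm_smul, Real.norm_of_nonneg hγ.le, real_inner_smul_right,
      inner_sub_left, real_inner_comm b y, real_inner_comm b x]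
    ring
  have h : (⟪b, y⟫ - ⟪b, x⟫ - γ / 2 * ‖b‖ ^ 2) * (2 * γ) ≤ ‖x - y‖ ^ 2 := by
    rw [norm_sub_rev]
    nlinarith [sq_nonneg ‖(y - x) - γ • b‖]
  have := (le_div_iff₀ (by positivity)).2 h
  linarith

theorem inner_add_smul_sub_norm_sq_div (b x : E) :
    ⟪b, x + γ • b⟫ - ‖x - (x + γ • b)‖ ^ 2 / (2 * γ) = ⟪b, x⟫ + γ / 2 * ‖b‖ ^ 2 := by
  rw [sub_add_cancel_left, norm_neg, norm_smul, Real.norm_eq_abs, mul_pow, sq_abs,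
    inner_add_right, real_inner_smul_right, real_inner_self_eq_norm_sq]
  field_simp
  ring

end Pointwise

section Coupling

variable {E : Type*} [NormedAddCommGroup E] [InnerProductSpace ℝ E] [MeasurableSpace E]
  {γ : ℝ} {b : E} {ν : Measure E} {π : Measure (E × E)}

theorem integral_inner_sub_norm_sub_sq_div_le [CompleteSpace E] [IsProbabilityMeasure π]
    (hγ : 0 < γ) (h₁ : Integrable (fun p => p.1) π) (h₂ : Integrable (fun p => p.2) π)
    (hdist : Integrable (fun p => ‖p.1 - p.2‖ ^ 2) π) :
    ∫ p, (⟪b, p.2⟫ - ‖p.1 - p.2‖ ^ 2 / (2 * γ)) ∂π ≤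
      ⟪b, ∫ p, p.1 ∂π⟫ + γ / 2 * ‖b‖ ^ 2 := by
  calc ∫ p, (⟪b, p.2⟫ - ‖p.1 - p.2‖ ^ 2 / (2 * γ)) ∂π
      ≤ ∫ p, (⟪b, p.1⟫ + γ / 2 * ‖b‖ ^ 2) ∂π :=
        integral_mono ((h₂.const_inner b).sub (hdist.div_const _))
          ((h₁.const_inner b).add (integrable_const _))
          fun p => inner_sub_norm_sub_sq_div_le hγ b p.1 p.2
    _ = ⟪b, ∫ p, p.1 ∂π⟫ + γ / 2 * ‖b‖ ^ 2 := by
        rw [integral_add (h₁.const_inner b) (integrable_const _), integral_const,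
          integral_inner h₁, probReal_univ, one_smul]

variable [BorelSpace E] (γ b ν)

noncomputable def translateCoupling : Measure (E × E) :=
  ν.map fun x => (x, x + γ • b)

variable {γ b ν}

theorem measurable_prodMk_add_const : Measurable fun x : E => (x, x + γ • b) :=
  measurable_id.prodMk (measurable_id.add_const _)

instance [IsProbabilityMeasure ν] : IsProbabilityMeasure (translateCoupling γ b ν) :=
  Measure.isProbabilityMeasure_map measurable_prodMk_add_const.aemeasurable

theorem translateCoupling_map_fst : (translateCoupling γ b ν).map Prod.fst = ν := by
  rw [translateCoupling, Measure.map_map measurable_fst measurable_prodMk_add_const]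
  exact Measure.map_id

variable [SecondCountableTopology E]

theorem integral_fst_eq_of_map_fst_eq (hπ : π.map Prod.fst = ν) :
    ∫ p, p.1 ∂π = ∫ x, x ∂ν := by
  subst hπ
  exact (integral_map measurable_fst.aemeasurable aestronglyMeasurable_id).symm

theorem integrable_translateCoupling_iff {F : Type*} [NormedAddCommGroup F] {g : E × E → F}
    (hg : Continuous g) :
    Integrable g (translateCoupling γ b ν) ↔ Integrable (fun x => g (x, x + γ • b)) ν :=
  integrable_map_measure hg.aestronglyMeasurable measurable_prodMk_add_const.aemeasurable

theorem integral_translateCoupling [CompleteSpace E] [IsProbabilityMeasure ν]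
    (hν : Integrable (fun x => x) ν) :
    ∫ p, (⟪b, p.2⟫ - ‖p.1 - p.2‖ ^ 2 / (2 * γ)) ∂(translateCoupling γ b ν) =
      ⟪b, ∫ x, x ∂ν⟫ + γ / 2 * ‖b‖ ^ 2 := by
  rw [translateCoupling, integral_map measurable_prodMk_add_const.aemeasurable (by fun_prop)]
  simp only [inner_add_smul_sub_norm_sq_div]
  rw [integral_add (hν.const_inner b) (integrable_const _), integral_const, integral_inner hν,
    probReal_univ, one_smul]

end Coupling

theorem stmt_13_general (N : ℕ) (γ : ℝ) (hγ : 0 < γ)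
    (b : EuclideanSpace ℝ (Fin N))
    (ν : Measure (EuclideanSpace ℝ (Fin N))) [IsProbabilityMeasure ν]
    (hν : Integrable id ν) :
    IsGreatest
      { r : ℝ |
        ∃ π : Measure (EuclideanSpace ℝ (Fin N) × EuclideanSpace ℝ (Fin N)),
          IsProbabilityMeasure π ∧ π.map Prod.fst = ν ∧
          Integrable (fun p => p.1) π ∧ Integrable (fun p => p.2) π ∧
          Integrable (fun p => ‖p.1 - p.2‖ ^ 2) π ∧
          r = ∫ p, (⟪b, p.2⟫ - ‖p.1 - p.2‖ ^ 2 / (2 * γ)) ∂π }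
      (⟪b, ∫ x, x ∂ν⟫ + γ / 2 * ‖b‖ ^ 2) ∧
    ∫ p, (⟪b, p.2⟫ - ‖p.1 - p.2‖ ^ 2 / (2 * γ))
        ∂(ν.map (fun x => (x, x + γ • b)))
      = ⟪b, ∫ x, x ∂ν⟫ + γ / 2 * ‖b‖ ^ 2 := by
  have hvalue := integral_translateCoupling (γ := γ) (b := b) hν
  refine ⟨⟨⟨translateCoupling γ b ν, inferInstance, translateCoupling_map_fst, ?_, ?_, ?_,
    hvalue.symm⟩, ?_⟩, hvalue⟩
  · exact (integrable_translateCoupling_iff continuous_fst).2 hν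
  · exact (integrable_translateCoupling_iff continuous_snd).2 (hν.add (integrable_const _))
  · refine (integrable_translateCoupling_iff (by fun_prop)).2 ?_
    simp only [sub_add_cancel_left, norm_neg]
    exact integrable_const _
  · rintro _ ⟨π, _, hπ, h₁, h₂, hdist, rfl⟩
    exact (integral_inner_sub_norm_sub_sq_div_le hγ h₁ h₂ hdist).trans_eq
      (by rw [integral_fst_eq_of_map_fst_eq hπ])

/-- **The translated measure maximizes the Wasserstein-penalized functional (coupling form).**
Let `N ≥ 1`, `γ > 0`, `b ∈ ℝᴺ`, and `ν` a probability measure on `ℝᴺ` with Bochner-integrable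
identity and mean `m₀ = ∫ x dν`.  Among all couplings `π` with first marginal `ν` (and the
required integrability), the value `∫ (⟨b,y⟩ − ‖x−y‖²/(2γ)) dπ` has greatest element
`⟨b,m₀⟩ + (γ/2)‖b‖²`, attained by the pushforward of `ν` under `x ↦ (x, x + γ·b)`. -/
theorem stmt_13 (N : ℕ) (hN : 1 ≤ N) (γ : ℝ) (hγ : 0 < γ)
    (b : EuclideanSpace ℝ (Fin N))
    (ν : Measure (EuclideanSpace ℝ (Fin N))) [IsProbabilityMeasure ν]
    (hν : Integrable id ν) :
    IsGreatest
      { r : ℝ |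
        ∃ π : Measure (EuclideanSpace ℝ (Fin N) × EuclideanSpace ℝ (Fin N)),
          IsProbabilityMeasure π ∧ π.map Prod.fst = ν ∧
          Integrable (fun p => p.1) π ∧ Integrable (fun p => p.2) π ∧
          Integrable (fun p => ‖p.1 - p.2‖ ^ 2) π ∧
          r = ∫ p, (⟪b, p.2⟫ - ‖p.1 - p.2‖ ^ 2 / (2 * γ)) ∂π }
      (⟪b, ∫ x, x ∂ν⟫ + γ / 2 * ‖b‖ ^ 2) ∧
    ∫ p, (⟪b, p.2⟫ - ‖p.1 - p.2‖ ^ 2 / (2 * γ))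
        ∂(ν.map (fun x => (x, x + γ • b)))
      = ⟪b, ∫ x, x ∂ν⟫ + γ / 2 * ‖b‖ ^ 2 :=
  stmt_13_general N γ hγ b ν hν
end
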